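/- Suppose μ > 0 satisfies ⟪w, Qw⟫ ≥ μ‖w‖² for every w in the column space Ran(Q) of Q (i.e. μ is at most the smallest nonzero eigenvalue of Q). Then ψ is strongly convex with modulus μ on Ran(Q): for all w₁, w₂ ∈ Ran(Q) and all t ∈ [0,1], ψ(t w₁ + (1−t) w₂) ≤ t ψ(w₁) + (1−t) ψ(w₂) − (μ/2) t (1−t) ‖w₁ − w₂‖². -/
import Mathlib


open RealInnerProductSpace

variable {n : ℕ}

/-- `u(w) = x − σ(Qw + c)`. -/
noncomputable def uMap (Q : Matrix (Fin n) (Fin n) ℝ) (c x : EuclideanSpace ℝ (Fin n))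
    (σ : ℝ) (w : EuclideanSpace ℝ (Fin n)) : EuclideanSpace ℝ (Fin n) :=
  x - σ • (Matrix.toEuclideanLin Q w + c)

/-- The reduced augmented Lagrangian objective
`ψ(w) = ½⟪w,Qw⟫ + (1/2σ)(‖u(w)‖² − ‖u(w) − Π_S(u(w))‖²) − (1/2σ)‖x‖²`,
where `proj` is the metric projection onto `S`. -/
noncomputable def psi (Q : Matrix (Fin n) (Fin n) ℝ) (c x : EuclideanSpace ℝ (Fin n))
    (σ : ℝ) (proj : EuclideanSpace ℝ (Fin n) → EuclideanSpace ℝ (Fin n))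
    (w : EuclideanSpace ℝ (Fin n)) : ℝ :=
  1 / 2 * ⟪w, Matrix.toEuclideanLin Q w⟫ +
    1 / (2 * σ) * (‖uMap Q c x σ w‖ ^ 2 - ‖uMap Q c x σ w - proj (uMap Q c x σ w)‖ ^ 2) -
    1 / (2 * σ) * ‖x‖ ^ 2


set_option maxHeartbeats 1000000 in
/-- If `⟪w, Qw⟫ ≥ μ‖w‖²` on `Ran Q` with `μ > 0`, then `ψ` is strongly convex with modulus
`μ` on `Ran Q`. -/
theorem psi_strongConvexOn_ranQ
    (S : Set (EuclideanSpace ℝ (Fin n))) (hSne : S.Nonempty) (hScl : IsClosed S)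
    (hSconv : Convex ℝ S)
    (proj : EuclideanSpace ℝ (Fin n) → EuclideanSpace ℝ (Fin n))
    (hproj : ∀ v, proj v ∈ S ∧ ∀ q ∈ S, ‖v - proj v‖ ≤ ‖v - q‖)
    (Q : Matrix (Fin n) (Fin n) ℝ) (hQ : Q.PosSemidef)
    (c x : EuclideanSpace ℝ (Fin n)) (σ : ℝ) (hσ : 0 < σ)
    (μ : ℝ) (hμ : 0 < μ)
    (hcoer : ∀ w : EuclideanSpace ℝ (Fin n), (∃ y, Matrix.toEuclideanLin Q y = w) →
      μ * ‖w‖ ^ 2 ≤ ⟪w, Matrix.toEuclideanLin Q w⟫) :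
    ∀ w₁ w₂ : EuclideanSpace ℝ (Fin n),
      (∃ y, Matrix.toEuclideanLin Q y = w₁) → (∃ y, Matrix.toEuclideanLin Q y = w₂) →
      ∀ t : ℝ, t ∈ Set.Icc (0 : ℝ) 1 →
        psi Q c x σ proj (t • w₁ + (1 - t) • w₂) ≤
          t * psi Q c x σ proj w₁ + (1 - t) * psi Q c x σ proj w₂ -
            μ / 2 * t * (1 - t) * ‖w₁ - w₂‖ ^ 2 := by
  intro w₁ w₂ ⟨y₁, hy₁⟩ ⟨y₂, hy₂⟩ t ⟨ht0, ht1⟩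
  set A := Matrix.toEuclideanLin Q with hA
  have ht0' : (0:ℝ) ≤ 1 - t := by linarith
  -- affinity of uMap
  set u₁ := uMap Q c x σ w₁ with hu₁
  set u₂ := uMap Q c x σ w₂ with hu₂
  have huaff : uMap Q c x σ (t • w₁ + (1 - t) • w₂) = t • u₁ + (1 - t) • u₂ := by
    simp only [hu₁, hu₂, uMap, ← hA, map_add, map_smul]
    module
  -- convexity of g(v) = ‖v‖² − ‖v − proj v‖²
  set v := t • u₁ + (1 - t) • u₂ with hv
  set s := proj v with hs
  have hexp : ∀ a : EuclideanSpace ℝ (Fin n), ‖a‖ ^ 2 - ‖a - s‖ ^ 2 = 2 * ⟪a, s⟫ - ‖s‖ ^ 2 := by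
    intro a
    rw [@norm_sub_sq_real]
    ring
  have hgv : ‖v‖ ^ 2 - ‖v - s‖ ^ 2
      = t * (2 * ⟪u₁, s⟫ - ‖s‖ ^ 2) + (1 - t) * (2 * ⟪u₂, s⟫ - ‖s‖ ^ 2) := by
    rw [hexp v, hv, inner_add_left, real_inner_smul_left, real_inner_smul_left]
    ring
  have hle₁ : 2 * ⟪u₁, s⟫ - ‖s‖ ^ 2 ≤ ‖u₁‖ ^ 2 - ‖u₁ - proj u₁‖ ^ 2 := by
    have h := (hproj u₁).2 s ((hproj v).1)
    have h2 : ‖u₁ - proj u₁‖ ^ 2 ≤ ‖u₁ - s‖ ^ 2 := pow_le_pow_left₀ (norm_nonneg _) h 2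
    linarith [hexp u₁]
  have hle₂ : 2 * ⟪u₂, s⟫ - ‖s‖ ^ 2 ≤ ‖u₂‖ ^ 2 - ‖u₂ - proj u₂‖ ^ 2 := by
    have h := (hproj u₂).2 s ((hproj v).1)
    have h2 : ‖u₂ - proj u₂‖ ^ 2 ≤ ‖u₂ - s‖ ^ 2 := pow_le_pow_left₀ (norm_nonneg _) h 2
    linarith [hexp u₂]
  have hgconv : ‖v‖ ^ 2 - ‖v - s‖ ^ 2
      ≤ t * (‖u₁‖ ^ 2 - ‖u₁ - proj u₁‖ ^ 2) + (1 - t) * (‖u₂‖ ^ 2 - ‖u₂ - proj u₂‖ ^ 2) := by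
    rw [hgv]
    have := mul_le_mul_of_nonneg_left hle₁ ht0
    have := mul_le_mul_of_nonneg_left hle₂ ht0'
    linarith
  -- quadratic part
  have hq : ⟪t • w₁ + (1 - t) • w₂, A (t • w₁ + (1 - t) • w₂)⟫
      = t^2 * ⟪w₁, A w₁⟫ + t*(1-t) * ⟪w₁, A w₂⟫ + (1-t)*t * ⟪w₂, A w₁⟫
        + (1-t)^2 * ⟪w₂, A w₂⟫ := by
    simp only [map_add, map_smul, inner_add_left, inner_add_right,
      real_inner_smul_left, real_inner_smul_right]
    ring
  have hd : ⟪w₁ - w₂, A (w₁ - w₂)⟫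
      = ⟪w₁, A w₁⟫ - ⟪w₁, A w₂⟫ - ⟪w₂, A w₁⟫ + ⟪w₂, A w₂⟫ := by
    simp only [map_sub, inner_sub_left, inner_sub_right]
    ring
  have hdran : μ * ‖w₁ - w₂‖ ^ 2 ≤ ⟪w₁ - w₂, A (w₁ - w₂)⟫ :=
    hcoer _ ⟨y₁ - y₂, by rw [map_sub, hy₁, hy₂]⟩
  have hquad : ⟪t • w₁ + (1 - t) • w₂, A (t • w₁ + (1 - t) • w₂)⟫
      ≤ t * ⟪w₁, A w₁⟫ + (1 - t) * ⟪w₂, A w₂⟫ - t * (1 - t) * (μ * ‖w₁ - w₂‖ ^ 2) := by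
    nlinarith [mul_le_mul_of_nonneg_left hdran (mul_nonneg ht0 ht0')]
  -- combine
  have hσ' : (0:ℝ) < 1 / (2 * σ) := by positivity
  simp only [psi, huaff, ← hv, ← hs, ← hu₁, ← hu₂, ← hA]
  have := mul_le_mul_of_nonneg_left hgconv hσ'.le
  nlinarith [this, hquad]
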